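/- For all λ, μ ∈ ℂ with |λ| = |μ| = 1, every a ∈ ℂ and every 0 ≤ R ≤ 1, there exist unique analytic functions h, g on 𝔻 with h(0) = g(0) = 0, h − λ·g = k_a and g' = μ·l_R·h'; moreover h'(0) = 1, h' is nonvanishing on 𝔻 and |g'(z)| < |h'(z)| for all z ∈ 𝔻, so that K_H(λ, a, μ, R) = h + conj(g) is a normalized sense-preserving harmonic mapping on 𝔻. -/

import Mathlib

/-!
With `ω = μ l_R`, differentiating `h - λ g = k_a` and substituting `g' = ω h'` forces
`h' = k_a' / (1 - λ ω)` and `g' = ω h'`. The Cayley map `(1 + z) / (1 - z)` sends the disk into the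
right half-plane, and so does its `R`-th power for `|R| ≤ 1`; hence `|l_R| < 1`, the denominator
`1 - λ ω` never vanishes, and `|g'| = |l_R| |h'| < |h'|`. Existence: `g` is the primitive of
`ω k_a' / (1 - λ ω)` vanishing at `0` (holomorphic functions on a disk have primitives) and
`h = k_a + λ g`. Uniqueness: the derivatives are forced, the normalization fixes the constant.
Finally `h'(0) = k_a'(0) = 1` and `h' ≠ 0` because `k_a' ≠ 0`.
-/

open Complex Set

noncomputable section

/-- The open unit disk in the complex plane. -/
def unitDisk : Set ℂ := {z : ℂ | ‖z‖ < 1}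

/-- The generalized Koebe function `k_a`, using the principal branch of the logarithm
(via the complex power function). -/
def koebeFn (a : ℂ) (z : ℂ) : ℂ :=
  if a = 0 then (1 / 2) * Complex.log ((1 + z) / (1 - z))
  else (1 / (2 * a)) * (((1 + z) / (1 - z)) ^ a - 1)

/-- The lens map `l_R` (with principal-branch powers); note that this formula also
gives `l_0 ≡ 0` and `l_1 = id` on the unit disk. -/
def lensMap (R : ℝ) (z : ℂ) : ℂ :=
  (((1 + z) / (1 - z)) ^ (R : ℂ) - 1) / (((1 + z) / (1 - z)) ^ (R : ℂ) + 1)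

/-- The `n`-th Taylor coefficient of `f` at `0`. -/
def coeffAt (f : ℂ → ℂ) (n : ℕ) : ℂ := iteratedDeriv n f 0 / n.factorial

/-- A normalized sense-preserving harmonic mapping `f = h + conj g` on the unit disk,
recorded via its analytic part `h` and co-analytic part `g`. -/
structure IsNormalizedSPH (h g : ℂ → ℂ) : Prop where
  h_analytic : DifferentiableOn ℂ h unitDisk
  g_analytic : DifferentiableOn ℂ g unitDisk
  h_zero : h 0 = 0
  g_zero : g 0 = 0
  dh_zero : deriv h 0 = 1
  dh_ne : ∀ z ∈ unitDisk, deriv h z ≠ 0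
  sense_preserving : ∀ z ∈ unitDisk, ‖deriv g z‖ < ‖deriv h z‖

open Metric Filter Topology

theorem unitDisk_eq_ball : unitDisk = ball (0 : ℂ) 1 := by
  ext z
  simp [unitDisk]

theorem isOpen_unitDisk : IsOpen unitDisk :=
  unitDisk_eq_ball ▸ isOpen_ball

theorem isPreconnected_unitDisk : IsPreconnected unitDisk :=
  unitDisk_eq_ball ▸ (convex_ball (0 : ℂ) 1).isPreconnected

theorem zero_mem_unitDisk : (0 : ℂ) ∈ unitDisk := by
  simp [unitDisk]

theorem one_sub_ne_zero_of_norm_lt_one {z : ℂ} (hz : ‖z‖ < 1) : 1 - z ≠ 0 := by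
  rw [sub_ne_zero]
  rintro rfl
  simp at hz

theorem re_one_add_div_one_sub_pos {z : ℂ} (hz : ‖z‖ < 1) : 0 < ((1 + z) / (1 - z)).re := by
  have hnum : (1 + z).re * (1 - z).re + (1 + z).im * (1 - z).im = 1 - ‖z‖ ^ 2 := by
    rw [Complex.sq_norm, normSq_apply]
    simp only [add_re, add_im, sub_re, sub_im, one_re, one_im]
    ring
  rw [div_re, ← add_div, hnum]
  exact div_pos (by nlinarith [norm_nonneg z])
    (normSq_pos.mpr (one_sub_ne_zero_of_norm_lt_one hz))

theorem hasDerivAt_one_add_div_one_sub {z : ℂ} (hz : 1 - z ≠ 0) :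
    HasDerivAt (fun y : ℂ => (1 + y) / (1 - y)) (2 / (1 - z) ^ 2) z :=
  (((hasDerivAt_id z).const_add 1).div ((hasDerivAt_id z).const_sub 1) hz).congr_deriv
    (by simp only [id]; ring)

theorem re_cpow_ofReal_pos {w : ℂ} (hw : 0 < w.re) {s : ℝ} (hs : |s| ≤ 1) :
    0 < (w ^ (s : ℂ)).re := by
  have hw0 : w ≠ 0 := fun h => by simp [h] at hw
  rw [cpow_ofReal_re]
  refine mul_pos (Real.rpow_pos_of_pos (norm_pos_iff.mpr hw0) s) (Real.cos_pos_of_mem_Ioo ?_)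
  have harg : |arg w * s| < Real.pi / 2 := by
    rw [abs_mul]
    calc |arg w| * |s| ≤ |arg w| := mul_le_of_le_one_right (abs_nonneg _) hs
      _ < Real.pi / 2 := abs_arg_lt_pi_div_two_iff.mpr (Or.inl hw)
  exact ⟨by linarith [neg_abs_le (arg w * s)], lt_of_abs_lt harg⟩

theorem norm_sub_one_lt_norm_add_one {w : ℂ} (hw : 0 < w.re) : ‖w - 1‖ < ‖w + 1‖ := by
  rw [← sq_lt_sq₀ (norm_nonneg _) (norm_nonneg _), Complex.sq_norm, Complex.sq_norm,
    normSq_apply, normSq_apply]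
  simp only [sub_re, sub_im, add_re, add_im, one_re, one_im]
  nlinarith

theorem koebeFn_zero (a : ℂ) : koebeFn a 0 = 0 := by
  unfold koebeFn
  split <;> norm_num

theorem hasDerivAt_koebeFn (a : ℂ) {z : ℂ} (hz : ‖z‖ < 1) :
    HasDerivAt (koebeFn a) (((1 + z) / (1 - z)) ^ (a - 1) / (1 - z) ^ 2) z := by
  have hz1 := one_sub_ne_zero_of_norm_lt_one hz
  have hw := hasDerivAt_one_add_div_one_sub hz1
  have hslit : (1 + z) / (1 - z) ∈ slitPlane := Or.inl (re_one_add_div_one_sub_pos hz)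
  by_cases ha : a = 0
  · subst ha
    have hlog := (hw.clog hslit).const_mul (1 / 2 : ℂ)
    refine (hlog.congr_of_eventuallyEq (.of_forall fun y => by simp [koebeFn])).congr_deriv ?_
    rw [zero_sub, cpow_neg_one]
    field_simp
  · have hpow := ((hw.cpow_const (c := a) hslit).sub_const 1).const_mul (1 / (2 * a))
    refine (hpow.congr_of_eventuallyEq
      (.of_forall fun y => by simp [koebeFn, ha])).congr_deriv ?_
    field_simp

theorem deriv_koebeFn_zero (a : ℂ) : deriv (koebeFn a) 0 = 1 := by
  simp [(hasDerivAt_koebeFn a (z := 0) (by simp)).deriv]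

theorem deriv_koebeFn_ne_zero (a : ℂ) {z : ℂ} (hz : ‖z‖ < 1) : deriv (koebeFn a) z ≠ 0 := by
  rw [(hasDerivAt_koebeFn a hz).deriv]
  refine div_ne_zero ?_ (pow_ne_zero 2 (one_sub_ne_zero_of_norm_lt_one hz))
  rw [Ne, cpow_eq_zero_iff, not_and_or]
  exact Or.inl (slitPlane_ne_zero (Or.inl (re_one_add_div_one_sub_pos hz)))

theorem lensMap_zero (R : ℝ) : lensMap R 0 = 0 := by
  simp [lensMap]

theorem norm_lensMap_lt_one {R : ℝ} (hR : |R| ≤ 1) {z : ℂ} (hz : ‖z‖ < 1) :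
    ‖lensMap R z‖ < 1 := by
  have hre := re_cpow_ofReal_pos (re_one_add_div_one_sub_pos hz) hR
  have hden : 0 < ‖((1 + z) / (1 - z)) ^ (R : ℂ) + 1‖ :=
    lt_of_le_of_lt (norm_nonneg _) (norm_sub_one_lt_norm_add_one hre)
  rw [lensMap, norm_div, div_lt_one hden]
  exact norm_sub_one_lt_norm_add_one hre

theorem differentiableAt_lensMap {R : ℝ} (hR : |R| ≤ 1) {z : ℂ} (hz : ‖z‖ < 1) :
    DifferentiableAt ℂ (lensMap R) z := by
  have hpow : DifferentiableAt ℂ (fun y : ℂ => ((1 + y) / (1 - y)) ^ (R : ℂ)) z :=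
    ((hasDerivAt_one_add_div_one_sub (one_sub_ne_zero_of_norm_lt_one hz)).cpow_const
      (c := R) (Or.inl (re_one_add_div_one_sub_pos hz))).differentiableAt
  refine (hpow.sub_const 1).div (hpow.add_const 1) fun h => ?_
  have := re_cpow_ofReal_pos (re_one_add_div_one_sub_pos hz) hR
  have h' := congrArg re h
  simp only [add_re, one_re, zero_re] at h'
  linarith

/-- The Clunie–Sheil-Small shear of `k` in direction `λ` with dilatation `ω`. -/
structure IsShearSolution (U : Set ℂ) (k ω : ℂ → ℂ) (lam : ℂ) (h g : ℂ → ℂ) : Prop where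
  differentiableOn_h : DifferentiableOn ℂ h U
  differentiableOn_g : DifferentiableOn ℂ g U
  sub_eq : ∀ z ∈ U, h z - lam * g z = k z
  deriv_g : ∀ z ∈ U, deriv g z = ω z * deriv h z

namespace IsShearSolution

variable {U : Set ℂ} {k ω h g : ℂ → ℂ} {lam : ℂ}

theorem deriv_h (hsol : IsShearSolution U k ω lam h g) (hU : IsOpen U)
    (hω : ∀ z ∈ U, lam * ω z ≠ 1) {z : ℂ} (hz : z ∈ U) :
    deriv h z = deriv k z / (1 - lam * ω z) := by
  have hUz := hU.mem_nhds hz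
  have hk : k =ᶠ[𝓝 z] fun w => h w - lam * g w :=
    eventually_of_mem hUz fun w hw => (hsol.sub_eq w hw).symm
  have hderiv_k : deriv k z = deriv h z - lam * deriv g z := by
    rw [hk.deriv_eq]
    exact ((hsol.differentiableOn_h.differentiableAt hUz).hasDerivAt.sub
      ((hsol.differentiableOn_g.differentiableAt hUz).hasDerivAt.const_mul lam)).deriv
  rw [eq_div_iff (sub_ne_zero.mpr (hω z hz).symm), hderiv_k, hsol.deriv_g z hz]
  ring

theorem norm_deriv_g_lt (hsol : IsShearSolution U k ω lam h g) {z : ℂ} (hz : z ∈ U)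
    (hω : ‖ω z‖ < 1) (hh : deriv h z ≠ 0) : ‖deriv g z‖ < ‖deriv h z‖ := by
  rw [hsol.deriv_g z hz, norm_mul]
  exact mul_lt_of_lt_one_left (norm_pos_iff.mpr hh) hω

theorem eqOn {h' g' : ℂ → ℂ} (hsol : IsShearSolution U k ω lam h g)
    (hsol' : IsShearSolution U k ω lam h' g') (hU : IsOpen U) (hU' : IsPreconnected U)
    (hω : ∀ z ∈ U, lam * ω z ≠ 1) {c : ℂ} (hc : c ∈ U) (hgc : g c = g' c) :
    EqOn h h' U ∧ EqOn g g' U := by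
  have hg : EqOn g g' U := by
    refine hU.eqOn_of_deriv_eq hU' hsol.differentiableOn_g hsol'.differentiableOn_g
      (fun z hz => ?_) hc hgc
    rw [hsol.deriv_g z hz, hsol'.deriv_g z hz, hsol.deriv_h hU hω hz,
      hsol'.deriv_h hU hω hz]
  refine ⟨fun z hz => ?_, hg⟩
  rw [← sub_add_cancel (h z) (lam * g z), hsol.sub_eq z hz, hg hz, ← hsol'.sub_eq z hz,
    sub_add_cancel]

end IsShearSolution

theorem exists_isShearSolution {k ω : ℂ → ℂ} {lam c : ℂ} {r : ℝ}
    (hk : DifferentiableOn ℂ k (ball c r)) (hω : DifferentiableOn ℂ ω (ball c r))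
    (hlam : ∀ z ∈ ball c r, lam * ω z ≠ 1) :
    ∃ h g, IsShearSolution (ball c r) k ω lam h g ∧ g c = 0 := by
  have hden : ∀ z ∈ ball c r, 1 - lam * ω z ≠ 0 := fun z hz => sub_ne_zero.mpr (hlam z hz).symm
  set F : ℂ → ℂ := fun z => deriv k z / (1 - lam * ω z)
  have hF : DifferentiableOn ℂ F (ball c r) :=
    (hk.deriv isOpen_ball).div (differentiableOn_const _ |>.sub (hω.const_mul lam)) hden
  obtain ⟨g, hgc, hg⟩ := (hω.mul hF).isExactOn_ball.with_val_at c 0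
  have hkd : ∀ z ∈ ball c r, HasDerivAt k (deriv k z) z := fun z hz =>
    (hk.differentiableAt (isOpen_ball.mem_nhds hz)).hasDerivAt
  have hh : ∀ z ∈ ball c r, HasDerivAt (fun w => k w + lam * g w) (F z) z := by
    intro z hz
    refine ((hkd z hz).add ((hg z hz).const_mul lam)).congr_deriv ?_
    simp only [F, Pi.mul_apply]
    field_simp [hden z hz]
    ring
  refine ⟨fun w => k w + lam * g w, g,
    ⟨fun z hz => (hh z hz).differentiableAt.differentiableWithinAt,
      fun z hz => (hg z hz).differentiableAt.differentiableWithinAt, fun z _ => by ring,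
      fun z hz => ?_⟩, hgc⟩
  rw [(hg z hz).deriv, (hh z hz).deriv]
  rfl

/-- For all unimodular `λ, μ`, every `a ∈ ℂ` and every `0 ≤ R ≤ 1`, the shear system
`h - λg = k_a`, `g' = μ·l_R·h'`, `h(0) = g(0) = 0` has a unique pair of analytic
solutions `(h, g)` on the unit disk; moreover `h'(0) = 1`, `h'` is nonvanishing and
`|g'| < |h'|` on the disk, so `K_H(λ, a, μ, R) = h + conj g` is a normalized
sense-preserving harmonic mapping. -/
theorem generalized_harmonic_koebe_exists_unique
    (lam mu : ℂ) (hlam : ‖lam‖ = 1) (hmu : ‖mu‖ = 1)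
    (a : ℂ) (R : ℝ) (hR0 : 0 ≤ R) (hR1 : R ≤ 1) :
    ∃ h g : ℂ → ℂ,
      (DifferentiableOn ℂ h unitDisk ∧ DifferentiableOn ℂ g unitDisk ∧
        h 0 = 0 ∧ g 0 = 0 ∧
        (∀ z ∈ unitDisk, h z - lam * g z = koebeFn a z) ∧
        (∀ z ∈ unitDisk, deriv g z = mu * lensMap R z * deriv h z) ∧
        IsNormalizedSPH h g) ∧
      ∀ h' g' : ℂ → ℂ,
        DifferentiableOn ℂ h' unitDisk → DifferentiableOn ℂ g' unitDisk →
        h' 0 = 0 → g' 0 = 0 →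
        (∀ z ∈ unitDisk, h' z - lam * g' z = koebeFn a z) →
        (∀ z ∈ unitDisk, deriv g' z = mu * lensMap R z * deriv h' z) →
        Set.EqOn h h' unitDisk ∧ Set.EqOn g g' unitDisk := by
  have hR : |R| ≤ 1 := abs_le.mpr ⟨by linarith, hR1⟩
  have hnorm : ∀ z ∈ unitDisk, ‖mu * lensMap R z‖ < 1 := fun z hz => by
    simpa [hmu] using norm_lensMap_lt_one hR hz
  have hω : ∀ z ∈ unitDisk, lam * (mu * lensMap R z) ≠ 1 := fun z hz h1 =>
    (hnorm z hz).ne (by simpa [hlam] using congrArg norm h1)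
  have hk : DifferentiableOn ℂ (koebeFn a) unitDisk := fun z hz =>
    (hasDerivAt_koebeFn a hz).differentiableAt.differentiableWithinAt
  have hl : DifferentiableOn ℂ (fun z => mu * lensMap R z) unitDisk := fun z hz =>
    ((differentiableAt_lensMap hR hz).const_mul mu).differentiableWithinAt
  obtain ⟨h, g, hsol, hg0⟩ := exists_isShearSolution (c := 0) (r := 1)
    (unitDisk_eq_ball ▸ hk) (unitDisk_eq_ball ▸ hl) (unitDisk_eq_ball ▸ hω)
  rw [← unitDisk_eq_ball] at hsol
  have hh0 : h 0 = 0 := by simpa [hg0, koebeFn_zero] using hsol.sub_eq 0 zero_mem_unitDisk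
  have hderiv := fun z (hz : z ∈ unitDisk) => hsol.deriv_h isOpen_unitDisk hω hz
  have hderiv_ne : ∀ z ∈ unitDisk, deriv h z ≠ 0 := fun z hz => by
    rw [hderiv z hz]
    exact div_ne_zero (deriv_koebeFn_ne_zero a hz) (sub_ne_zero.mpr (hω z hz).symm)
  have hSPH : IsNormalizedSPH h g :=
    ⟨hsol.differentiableOn_h, hsol.differentiableOn_g, hh0, hg0,
      by simp [hderiv 0 zero_mem_unitDisk, deriv_koebeFn_zero, lensMap_zero], hderiv_ne,
      fun z hz => hsol.norm_deriv_g_lt hz (hnorm z hz) (hderiv_ne z hz)⟩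
  refine ⟨h, g, ⟨hSPH.h_analytic, hSPH.g_analytic, hh0, hg0, hsol.sub_eq, hsol.deriv_g, hSPH⟩,
    fun h' g' hh' hg' _ hg0' hsub' hderiv' => ?_⟩
  exact hsol.eqOn ⟨hh', hg', hsub', hderiv'⟩ isOpen_unitDisk isPreconnected_unitDisk hω
    zero_mem_unitDisk (hg0.trans hg0'.symm)
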